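/- Let Φ(x,y;ρ) denote the cumulative distribution function of a centered bivariate normal vector with unit variances and correlation ρ ∈ (−1,1), and φ(x,y;ρ) its density. Then for every fixed x, y the partial derivative of Φ(x,y;ρ) with respect to ρ equals the density: ∂Φ(x,y;ρ)/∂ρ = φ(x,y;ρ). -/

import Mathlib

open Real MeasureTheory

/-- The centered bivariate normal density with unit variances and correlation `ρ`. -/
noncomputable def bvnPDF (ρ x y : ℝ) : ℝ :=
  (2 * π * Real.sqrt (1 - ρ ^ 2))⁻¹ *
    Real.exp (-(x ^ 2 - 2 * ρ * x * y + y ^ 2) / (2 * (1 - ρ ^ 2)))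

/-- The centered bivariate normal CDF with unit variances and correlation `ρ`. -/
noncomputable def bvnCDF (ρ x y : ℝ) : ℝ :=
  ∫ u in Set.Iic x, ∫ v in Set.Iic y, bvnPDF ρ u v

open Set Filter Topology

namespace Plackett

noncomputable def phiU (r u v : ℝ) : ℝ := bvnPDF r u v * ((r * v - u) / (1 - r ^ 2))

noncomputable def DD (r u v : ℝ) : ℝ :=
  bvnPDF r u v * (((r * u - v) * (r * v - u) + r * (1 - r ^ 2)) / (1 - r ^ 2) ^ 2)

noncomputable def Kc (t₀ : ℝ) : ℝ := (2 * π * Real.sqrt (1 - t₀ ^ 2))⁻¹ * (1 + 4 / (1 - t₀))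

lemma bvnPDF_nonneg (r u v : ℝ) : 0 ≤ bvnPDF r u v := by
  unfold bvnPDF; positivity

lemma Kc_nonneg {t₀ : ℝ} (h : t₀ < 1) : 0 ≤ Kc t₀ := by
  unfold Kc
  have h1 : (0:ℝ) < 1 - t₀ := by linarith
  positivity

lemma bvn_symm (r u v : ℝ) : bvnPDF r u v = bvnPDF r v u := by
  unfold bvnPDF; ring_nf

/-! ### Continuity -/

lemma bvn_cont2 (t : ℝ) : Continuous (fun p : ℝ × ℝ => bvnPDF t p.1 p.2) := by
  unfold bvnPDF; fun_prop

lemma bvn_cont_v (t u : ℝ) : Continuous (fun v => bvnPDF t u v) := by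
  unfold bvnPDF; fun_prop

lemma DD_cont_v (t u : ℝ) : Continuous (fun v => DD t u v) := by
  unfold DD bvnPDF; fun_prop

lemma phiU_cont_u (t y : ℝ) : Continuous (fun u => phiU t u y) := by
  unfold phiU bvnPDF; fun_prop

/-! ### Derivatives -/

lemma hasDerivAt_u {r : ℝ} (hr : r ^ 2 < 1) (u v : ℝ) :
    HasDerivAt (fun u => bvnPDF r u v) (phiU r u v) u := by
  have h2 : (1 : ℝ) - r ^ 2 ≠ 0 := by nlinarith
  have hq : HasDerivAt (fun u : ℝ => -(u ^ 2 - 2 * r * u * v + v ^ 2) / (2 * (1 - r ^ 2)))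
      ((r * v - u) / (1 - r ^ 2)) u := by
    have h : HasDerivAt (fun u : ℝ => -(u ^ 2 - 2 * r * u * v + v ^ 2) / (2 * (1 - r ^ 2)))
        (-(2 * u ^ 1 - 2 * r * v) / (2 * (1 - r ^ 2))) u := by
      have hp : HasDerivAt (fun u : ℝ => u ^ 2 - 2 * r * u * v + v ^ 2)
          (2 * u ^ 1 - 2 * r * v) u := by
        have h1 : HasDerivAt (fun u : ℝ => u ^ 2) ((2 : ℕ) * u ^ 1) u := hasDerivAt_pow 2 u
        have h2' : HasDerivAt (fun u : ℝ => 2 * r * u * v) (2 * r * v) u := by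
          have := (hasDerivAt_id u).const_mul (2 * r)
          have := this.mul_const v
          simpa using this
        simpa using (h1.sub h2').add_const (v ^ 2)
      exact hp.neg.div_const _
    convert h using 1
    field_simp
    ring
  have := ((hq.exp).const_mul ((2 * π * Real.sqrt (1 - r ^ 2))⁻¹))
  refine this.congr_deriv (Eq.symm ?_)
  unfold phiU bvnPDF
  ring

lemma hasDerivAt_v {r : ℝ} (hr : r ^ 2 < 1) (u v : ℝ) :
    HasDerivAt (fun v => bvnPDF r u v) (phiU r v u) v := by
  have h := hasDerivAt_u hr v u
  have : (fun v => bvnPDF r u v) = fun v => bvnPDF r v u := by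
    funext w; exact bvn_symm r u w
  rw [this]; exact h

lemma hasDerivAt_phiU_v {r : ℝ} (hr : r ^ 2 < 1) (u v : ℝ) :
    HasDerivAt (fun v => phiU r u v) (DD r u v) v := by
  have hpos : (0 : ℝ) < 1 - r ^ 2 := by nlinarith
  have h2 : (1 : ℝ) - r ^ 2 ≠ 0 := ne_of_gt hpos
  have hsne : Real.sqrt (1 - r ^ 2) ≠ 0 := by positivity
  have hb := hasDerivAt_v hr u v
  have hl : HasDerivAt (fun v : ℝ => (r * v - u) / (1 - r ^ 2)) (r / (1 - r ^ 2)) v := by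
    have : HasDerivAt (fun v : ℝ => r * v - u) r v := by
      simpa using ((hasDerivAt_id v).const_mul r).sub_const u
    simpa using this.div_const (1 - r ^ 2)
  have := hb.mul hl
  refine this.congr_deriv (Eq.symm ?_)
  unfold phiU
  rw [bvn_symm r v u]
  unfold DD bvnPDF
  field_simp

lemma hasDerivAt_r {r : ℝ} (hr : r ^ 2 < 1) (u v : ℝ) :
    HasDerivAt (fun r => bvnPDF r u v) (DD r u v) r := by
  have hpos : (0 : ℝ) < 1 - r ^ 2 := by nlinarith
  have h2 : (1 : ℝ) - r ^ 2 ≠ 0 := ne_of_gt hpos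
  have hs : (0 : ℝ) < Real.sqrt (1 - r ^ 2) := Real.sqrt_pos.2 hpos
  have hsne : Real.sqrt (1 - r ^ 2) ≠ 0 := ne_of_gt hs
  have hs2 : Real.sqrt (1 - r ^ 2) ^ 2 = 1 - r ^ 2 := Real.sq_sqrt hpos.le
  have hinner : HasDerivAt (fun r : ℝ => 1 - r ^ 2) (-(2 * r)) r := by
    simpa using (hasDerivAt_pow 2 r).const_sub 1
  have hsqrt : HasDerivAt (fun r : ℝ => Real.sqrt (1 - r ^ 2))
      (-(2 * r) / (2 * Real.sqrt (1 - r ^ 2))) r := hinner.sqrt h2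
  have hc : HasDerivAt (fun r : ℝ => (2 * π * Real.sqrt (1 - r ^ 2))⁻¹)
      ((2 * π * Real.sqrt (1 - r ^ 2))⁻¹ * (r / (1 - r ^ 2))) r := by
    have hmul : HasDerivAt (fun r : ℝ => 2 * π * Real.sqrt (1 - r ^ 2))
        (2 * π * (-(2 * r) / (2 * Real.sqrt (1 - r ^ 2)))) r := hsqrt.const_mul (2 * π)
    have := hmul.inv (by positivity)
    refine this.congr_deriv (Eq.symm ?_)
    field_simp
    linear_combination r * hs2
  have hN : HasDerivAt (fun r : ℝ => -(u ^ 2 - 2 * r * u * v + v ^ 2)) (2 * u * v) r := by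
    have h1 : HasDerivAt (fun r : ℝ => 2 * r * u * v) (2 * u * v) r := by
      simpa using (((hasDerivAt_id r).const_mul 2).mul_const u).mul_const v
    exact (((hasDerivAt_const r (u ^ 2)).sub h1).add_const (v ^ 2)).neg.congr_deriv (by ring)
  have hd : HasDerivAt (fun r : ℝ => 2 * (1 - r ^ 2)) (2 * -(2 * r)) r := hinner.const_mul 2
  have hq := hN.div hd (by positivity)
  have := hc.mul hq.exp
  refine this.congr_deriv (Eq.symm ?_)
  unfold DD bvnPDF
  simp only [Pi.div_apply]
  field_simp
  ring

/-! ### Bounds -/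

lemma le_exp_half {z : ℝ} (hz : 0 ≤ z) : z * Real.exp (-z) ≤ Real.exp (-(z / 2)) := by
  have h4 : Real.exp (z / 4) ^ 2 = Real.exp (z / 2) := by
    rw [sq, ← Real.exp_add]; ring_nf
  have h1 : 1 + z / 4 ≤ Real.exp (z / 4) := by linarith [Real.add_one_le_exp (z / 4)]
  have hz2 : z ≤ Real.exp (z / 2) := by
    nlinarith [sq_nonneg (1 - z / 4), Real.exp_nonneg (z / 4)]
  calc z * Real.exp (-z) ≤ Real.exp (z / 2) * Real.exp (-z) :=
        mul_le_mul_of_nonneg_right hz2 (Real.exp_nonneg _)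
    _ = Real.exp (-(z / 2)) := by rw [← Real.exp_add]; ring_nf

lemma master {t₀ t : ℝ} (h1 : t₀ < 1) (ht : |t| ≤ t₀) (u v : ℝ) :
    bvnPDF t u v * (1 + 2 * (u ^ 2 + v ^ 2)) ≤
      Kc t₀ * Real.exp (-((1 - t₀) / 4) * (u ^ 2 + v ^ 2)) := by
  have h0 : 0 ≤ t₀ := le_trans (abs_nonneg t) ht
  have ht2 : t ^ 2 ≤ t₀ ^ 2 := by nlinarith [abs_nonneg t, sq_abs t]
  have hpos : (0 : ℝ) < 1 - t ^ 2 := by nlinarith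
  have hpos0 : (0 : ℝ) < 1 - t₀ ^ 2 := by nlinarith
  set w := u ^ 2 + v ^ 2 with hw
  have hwnn : 0 ≤ w := by positivity
  set b := (1 - t₀) / 2 with hb
  have hbpos : 0 < b := by simp only [hb]; linarith
  have hcoef : (2 * π * Real.sqrt (1 - t ^ 2))⁻¹ ≤ (2 * π * Real.sqrt (1 - t₀ ^ 2))⁻¹ := by
    apply inv_anti₀ (by positivity)
    have : Real.sqrt (1 - t₀ ^ 2) ≤ Real.sqrt (1 - t ^ 2) := Real.sqrt_le_sqrt (by nlinarith)
    nlinarith [Real.pi_pos, Real.sqrt_nonneg (1 - t₀ ^ 2)]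
  have hexp : -(u ^ 2 - 2 * t * u * v + v ^ 2) / (2 * (1 - t ^ 2)) ≤ -(b * w) := by
    have habs : t * u * v ≤ |t| * (|u| * |v|) := by
      calc t * u * v ≤ |t * u * v| := le_abs_self _
        _ = |t| * (|u| * |v|) := by rw [abs_mul, abs_mul, mul_assoc]
    have hN : (1 - t₀) * w ≤ u ^ 2 - 2 * t * u * v + v ^ 2 := by
      have h2uv : 2 * (|u| * |v|) ≤ u ^ 2 + v ^ 2 := by
        nlinarith [sq_nonneg (|u| - |v|), sq_abs u, sq_abs v]
      nlinarith [mul_le_mul_of_nonneg_right ht (mul_nonneg (abs_nonneg u) (abs_nonneg v)),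
        mul_le_mul_of_nonneg_left h2uv h0]
    rw [div_le_iff₀ (by positivity)]
    have hd : 2 * (1 - t ^ 2) ≤ 2 := by nlinarith
    have hbw : 0 ≤ b * w := by positivity
    nlinarith [mul_le_mul_of_nonneg_left hd hbw]
  have hbvn : bvnPDF t u v ≤ (2 * π * Real.sqrt (1 - t₀ ^ 2))⁻¹ * Real.exp (-(b * w)) := by
    unfold bvnPDF
    apply mul_le_mul hcoef (Real.exp_le_exp.2 hexp) (Real.exp_nonneg _) (by positivity)
  have hpoly : (1 + 2 * w) * Real.exp (-(b * w)) ≤ (1 + 4 / (1 - t₀)) * Real.exp (-(b * w / 2)) := by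
    have e1 : Real.exp (-(b * w)) ≤ Real.exp (-(b * w / 2)) := by
      apply Real.exp_le_exp.2; nlinarith
    have e2 : 2 * w * Real.exp (-(b * w)) ≤ (4 / (1 - t₀)) * Real.exp (-(b * w / 2)) := by
      have := le_exp_half (mul_nonneg hbpos.le hwnn)
      calc 2 * w * Real.exp (-(b * w)) = (2 / b) * (b * w * Real.exp (-(b * w))) := by
            field_simp
        _ ≤ (2 / b) * Real.exp (-(b * w / 2)) := by
            apply mul_le_mul_of_nonneg_left _ (by positivity)
            simpa using this
        _ = (4 / (1 - t₀)) * Real.exp (-(b * w / 2)) := by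
            have hbb : 2 / b = 4 / (1 - t₀) := by
              rw [hb]; rw [div_div_eq_mul_div]; ring
            rw [hbb]
    nlinarith [Real.exp_nonneg (-(b * w))]
  have key : Real.exp (-(b * w / 2)) = Real.exp (-((1 - t₀) / 4) * w) := by
    rw [hb]; ring_nf
  calc bvnPDF t u v * (1 + 2 * w)
      ≤ ((2 * π * Real.sqrt (1 - t₀ ^ 2))⁻¹ * Real.exp (-(b * w))) * (1 + 2 * w) := by
        apply mul_le_mul_of_nonneg_right hbvn (by positivity)
    _ = (2 * π * Real.sqrt (1 - t₀ ^ 2))⁻¹ * ((1 + 2 * w) * Real.exp (-(b * w))) := by ring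
    _ ≤ (2 * π * Real.sqrt (1 - t₀ ^ 2))⁻¹ * ((1 + 4 / (1 - t₀)) * Real.exp (-(b * w / 2))) := by
        apply mul_le_mul_of_nonneg_left hpoly (by positivity)
    _ = Kc t₀ * Real.exp (-((1 - t₀) / 4) * w) := by rw [Kc, key]; ring

lemma bvn_le {t₀ t : ℝ} (h1 : t₀ < 1) (ht : |t| ≤ t₀) (u v : ℝ) :
    bvnPDF t u v ≤ Kc t₀ * Real.exp (-((1 - t₀) / 4) * (u ^ 2 + v ^ 2)) := by
  calc bvnPDF t u v = bvnPDF t u v * 1 := (mul_one _).symm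
    _ ≤ bvnPDF t u v * (1 + 2 * (u ^ 2 + v ^ 2)) := by
        apply mul_le_mul_of_nonneg_left _ (bvnPDF_nonneg t u v)
        nlinarith [sq_nonneg u, sq_nonneg v]
    _ ≤ _ := master h1 ht u v

lemma abs_lin_le {t : ℝ} (hT : |t| ≤ 1) (u v : ℝ) : |t * v - u| ≤ 1 + 2 * (u ^ 2 + v ^ 2) := by
  have h1 : |t * v - u| ≤ |t| * |v| + |u| := by
    calc |t * v - u| ≤ |t * v| + |u| := abs_sub _ _
      _ = |t| * |v| + |u| := by rw [abs_mul]
  have h2 : |t| * |v| ≤ |v| := by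
    nlinarith [abs_nonneg v]
  nlinarith [sq_nonneg (|u| - 1), sq_nonneg (|v| - 1), sq_abs u, sq_abs v]

lemma phiU_abs_le {t₀ t : ℝ} (h1 : t₀ < 1) (ht : |t| ≤ t₀) (u v : ℝ) :
    |phiU t u v| ≤ (1 - t₀ ^ 2)⁻¹ * Kc t₀ * Real.exp (-((1 - t₀) / 4) * (u ^ 2 + v ^ 2)) := by
  have h0 : 0 ≤ t₀ := le_trans (abs_nonneg t) ht
  have ht2 : t ^ 2 ≤ t₀ ^ 2 := by nlinarith [abs_nonneg t, sq_abs t]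
  have hpos : (0 : ℝ) < 1 - t ^ 2 := by nlinarith
  have hpos0 : (0 : ℝ) < 1 - t₀ ^ 2 := by nlinarith
  have heq : |phiU t u v| = bvnPDF t u v * (|t * v - u| / (1 - t ^ 2)) := by
    unfold phiU
    rw [abs_mul, abs_of_nonneg (bvnPDF_nonneg t u v), abs_div, abs_of_pos hpos]
  rw [heq]
  have hdiv : |t * v - u| / (1 - t ^ 2) ≤ (1 + 2 * (u ^ 2 + v ^ 2)) / (1 - t₀ ^ 2) :=
    div_le_div₀ (by positivity) (abs_lin_le (le_trans ht h1.le) u v) hpos0 (by nlinarith)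
  calc bvnPDF t u v * (|t * v - u| / (1 - t ^ 2))
      ≤ bvnPDF t u v * ((1 + 2 * (u ^ 2 + v ^ 2)) / (1 - t₀ ^ 2)) :=
        mul_le_mul_of_nonneg_left hdiv (bvnPDF_nonneg t u v)
    _ = (1 - t₀ ^ 2)⁻¹ * (bvnPDF t u v * (1 + 2 * (u ^ 2 + v ^ 2))) := by ring
    _ ≤ (1 - t₀ ^ 2)⁻¹ * (Kc t₀ * Real.exp (-((1 - t₀) / 4) * (u ^ 2 + v ^ 2))) :=
        mul_le_mul_of_nonneg_left (master h1 ht u v) (by positivity)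
    _ = _ := by ring

lemma DD_abs_le {t₀ t : ℝ} (h1 : t₀ < 1) (ht : |t| ≤ t₀) (u v : ℝ) :
    |DD t u v| ≤ ((1 - t₀ ^ 2) ^ 2)⁻¹ * Kc t₀ *
      Real.exp (-((1 - t₀) / 4) * (u ^ 2 + v ^ 2)) := by
  have h0 : 0 ≤ t₀ := le_trans (abs_nonneg t) ht
  have ht2 : t ^ 2 ≤ t₀ ^ 2 := by nlinarith [abs_nonneg t, sq_abs t]
  have hpos : (0 : ℝ) < 1 - t ^ 2 := by nlinarith
  have hpos0 : (0 : ℝ) < 1 - t₀ ^ 2 := by nlinarith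
  have hT : |t| ≤ 1 := le_trans ht h1.le
  have hnum : |(t * u - v) * (t * v - u) + t * (1 - t ^ 2)| ≤ 1 + 2 * (u ^ 2 + v ^ 2) := by
    have ha : |t * u - v| ≤ |u| + |v| := by
      calc |t * u - v| ≤ |t * u| + |v| := abs_sub _ _
        _ = |t| * |u| + |v| := by rw [abs_mul]
        _ ≤ |u| + |v| := by nlinarith [abs_nonneg u]
    have hb : |t * v - u| ≤ |u| + |v| := by
      calc |t * v - u| ≤ |t * v| + |u| := abs_sub _ _
        _ = |t| * |v| + |u| := by rw [abs_mul]
        _ ≤ |u| + |v| := by nlinarith [abs_nonneg v]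
    have hc : |t * (1 - t ^ 2)| ≤ 1 := by
      rw [abs_mul, abs_of_pos hpos]
      nlinarith [abs_nonneg t, sq_abs t]
    calc |(t * u - v) * (t * v - u) + t * (1 - t ^ 2)|
        ≤ |(t * u - v) * (t * v - u)| + |t * (1 - t ^ 2)| := abs_add_le _ _
      _ = |t * u - v| * |t * v - u| + |t * (1 - t ^ 2)| := by rw [abs_mul]
      _ ≤ (|u| + |v|) * (|u| + |v|) + 1 := by
          have := mul_le_mul ha hb (abs_nonneg _) (by positivity)
          linarith
      _ ≤ 1 + 2 * (u ^ 2 + v ^ 2) := by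
          nlinarith [sq_nonneg (|u| - |v|), sq_abs u, sq_abs v]
  have heq : |DD t u v| = bvnPDF t u v *
      (|(t * u - v) * (t * v - u) + t * (1 - t ^ 2)| / (1 - t ^ 2) ^ 2) := by
    unfold DD
    rw [abs_mul, abs_of_nonneg (bvnPDF_nonneg t u v), abs_div, abs_pow, sq_abs]
  rw [heq]
  have hdiv : |(t * u - v) * (t * v - u) + t * (1 - t ^ 2)| / (1 - t ^ 2) ^ 2
      ≤ (1 + 2 * (u ^ 2 + v ^ 2)) / (1 - t₀ ^ 2) ^ 2 :=
    div_le_div₀ (by positivity) hnum (by positivity) (by nlinarith)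
  calc bvnPDF t u v * (|(t * u - v) * (t * v - u) + t * (1 - t ^ 2)| / (1 - t ^ 2) ^ 2)
      ≤ bvnPDF t u v * ((1 + 2 * (u ^ 2 + v ^ 2)) / (1 - t₀ ^ 2) ^ 2) :=
        mul_le_mul_of_nonneg_left hdiv (bvnPDF_nonneg t u v)
    _ = ((1 - t₀ ^ 2) ^ 2)⁻¹ * (bvnPDF t u v * (1 + 2 * (u ^ 2 + v ^ 2))) := by ring
    _ ≤ ((1 - t₀ ^ 2) ^ 2)⁻¹ * (Kc t₀ * Real.exp (-((1 - t₀) / 4) * (u ^ 2 + v ^ 2))) :=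
        mul_le_mul_of_nonneg_left (master h1 ht u v) (by positivity)
    _ = _ := by ring

lemma exp_split (β u v : ℝ) :
    Real.exp (-β * (u ^ 2 + v ^ 2)) = Real.exp (-β * u ^ 2) * Real.exp (-β * v ^ 2) := by
  rw [← Real.exp_add]; ring_nf

lemma tendsto_gauss_atBot {β : ℝ} (hβ : 0 < β) :
    Tendsto (fun v : ℝ => Real.exp (-β * v ^ 2)) atBot (𝓝 0) := by
  have h1 : Tendsto (fun v : ℝ => v ^ 2) atBot atTop := by
    have := (tendsto_pow_atTop (two_ne_zero)).comp (tendsto_abs_atBot_atTop (G := ℝ))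
    refine this.congr fun v => ?_
    simp [sq_abs]
  have h2 : Tendsto (fun v : ℝ => -β * v ^ 2) atBot atBot := by
    exact Tendsto.const_mul_atTop_of_neg (neg_lt_zero.2 hβ) h1
  exact Real.tendsto_exp_atBot.comp h2


open Metric in
theorem main (x y ρ : ℝ) (hρ : ρ ∈ Set.Ioo (-1 : ℝ) 1) :
    HasDerivAt (fun r => bvnCDF r x y) (bvnPDF ρ x y) ρ := by
  obtain ⟨hρ1, hρ2⟩ := hρ
  have hρabs : |ρ| < 1 := abs_lt.2 ⟨hρ1, hρ2⟩
  set t₀ : ℝ := (1 + |ρ|) / 2 with ht₀def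
  set δ : ℝ := (1 - |ρ|) / 4 with hδdef
  have hδ : 0 < δ := by rw [hδdef]; linarith
  have ht₀1 : t₀ < 1 := by rw [ht₀def]; linarith
  have ht₀0 : 0 ≤ t₀ := by rw [ht₀def]; positivity
  have hβ : 0 < (1 - t₀) / 4 := by linarith
  have hρt₀ : |ρ| ≤ t₀ := by rw [ht₀def]; linarith [abs_nonneg ρ]
  have hpos0 : (0 : ℝ) < 1 - t₀ ^ 2 := by nlinarith
  -- ball facts
  have hball : ∀ t ∈ ball ρ δ, ∀ s ∈ ball t δ, |s| ≤ t₀ := by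
    intro t ht s hs
    rw [Metric.mem_ball, Real.dist_eq] at ht hs
    have h1 : |s| ≤ |s - t| + |t - ρ| + |ρ| := by
      calc |s| = |(s - t) + (t - ρ) + ρ| := by ring_nf
        _ ≤ |(s - t) + (t - ρ)| + |ρ| := abs_add_le _ _
        _ ≤ |s - t| + |t - ρ| + |ρ| := by linarith [abs_add_le (s - t) (t - ρ)]
    rw [ht₀def]; rw [hδdef] at ht hs; linarith
  have hmem : ∀ t ∈ ball ρ δ, |t| ≤ t₀ := fun t ht => hball t ht t (mem_ball_self hδ)
  have hsq : ∀ {t : ℝ}, |t| ≤ t₀ → t ^ 2 < 1 := by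
    intro t ht
    nlinarith [sq_abs t, abs_nonneg t]
  -- integrability of the inner integrand and of DD on Iic y
  have hint_v : ∀ {t : ℝ}, |t| ≤ t₀ → ∀ u : ℝ,
      Integrable (fun v => bvnPDF t u v) (volume.restrict (Iic y)) := by
    intro t ht u
    apply Integrable.mono'
      (((integrable_exp_neg_mul_sq hβ).const_mul
        (Kc t₀ * Real.exp (-((1 - t₀) / 4) * u ^ 2))).restrict)
      (bvn_cont_v t u).aestronglyMeasurable
    filter_upwards with v
    rw [Real.norm_eq_abs, abs_of_nonneg (bvnPDF_nonneg t u v)]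
    calc bvnPDF t u v ≤ Kc t₀ * Real.exp (-((1 - t₀) / 4) * (u ^ 2 + v ^ 2)) := bvn_le ht₀1 ht u v
      _ = Kc t₀ * Real.exp (-((1 - t₀) / 4) * u ^ 2) * Real.exp (-((1 - t₀) / 4) * v ^ 2) := by
          rw [exp_split]; ring
  have hint_DD : ∀ {t : ℝ}, |t| ≤ t₀ → ∀ u : ℝ,
      Integrable (fun v => DD t u v) (volume.restrict (Iic y)) := by
    intro t ht u
    apply Integrable.mono'
      (((integrable_exp_neg_mul_sq hβ).const_mul
        (((1 - t₀ ^ 2) ^ 2)⁻¹ * Kc t₀ * Real.exp (-((1 - t₀) / 4) * u ^ 2))).restrict)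
      (DD_cont_v t u).aestronglyMeasurable
    filter_upwards with v
    rw [Real.norm_eq_abs]
    calc |DD t u v| ≤ ((1 - t₀ ^ 2) ^ 2)⁻¹ * Kc t₀ *
          Real.exp (-((1 - t₀) / 4) * (u ^ 2 + v ^ 2)) := DD_abs_le ht₀1 ht u v
      _ = ((1 - t₀ ^ 2) ^ 2)⁻¹ * Kc t₀ * Real.exp (-((1 - t₀) / 4) * u ^ 2) *
          Real.exp (-((1 - t₀) / 4) * v ^ 2) := by rw [exp_split]; ring
  -- F1 : the inner FTC
  have F1 : ∀ {t : ℝ}, |t| ≤ t₀ → ∀ u : ℝ, ∫ v in Iic y, DD t u v = phiU t u y := by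
    intro t ht u
    have ht2 : t ^ 2 < 1 := hsq ht
    have htend : Tendsto (fun v => phiU t u v) atBot (𝓝 0) := by
      have hg : Tendsto (fun v : ℝ => ((1 - t₀ ^ 2)⁻¹ * Kc t₀ *
          Real.exp (-((1 - t₀) / 4) * u ^ 2)) * Real.exp (-((1 - t₀) / 4) * v ^ 2))
          atBot (𝓝 0) := by
        have := (tendsto_gauss_atBot hβ).const_mul ((1 - t₀ ^ 2)⁻¹ * Kc t₀ *
          Real.exp (-((1 - t₀) / 4) * u ^ 2))
        simpa using this
      apply squeeze_zero_norm _ hg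
      intro v
      rw [Real.norm_eq_abs]
      calc |phiU t u v| ≤ (1 - t₀ ^ 2)⁻¹ * Kc t₀ *
            Real.exp (-((1 - t₀) / 4) * (u ^ 2 + v ^ 2)) := phiU_abs_le ht₀1 ht u v
        _ = ((1 - t₀ ^ 2)⁻¹ * Kc t₀ * Real.exp (-((1 - t₀) / 4) * u ^ 2)) *
            Real.exp (-((1 - t₀) / 4) * v ^ 2) := by rw [exp_split]; ring
    have h0 := integral_Iic_of_hasDerivAt_of_tendsto
      (f := fun v => phiU t u v) (f' := fun v => DD t u v) (a := y) (m := 0)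
      (hasDerivAt_phiU_v ht2 u y).continuousAt.continuousWithinAt
      (fun v _ => hasDerivAt_phiU_v ht2 u v)
      (hint_DD ht u) htend
    rw [h0, sub_zero]
  -- F2 : the outer FTC
  have F2 : ∫ u in Iic x, phiU ρ u y = bvnPDF ρ x y := by
    have hρ2' : ρ ^ 2 < 1 := hsq hρt₀
    have htend : Tendsto (fun u => bvnPDF ρ u y) atBot (𝓝 0) := by
      have hg : Tendsto (fun u : ℝ => (Kc t₀ *
          Real.exp (-((1 - t₀) / 4) * y ^ 2)) * Real.exp (-((1 - t₀) / 4) * u ^ 2))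
          atBot (𝓝 0) := by
        have := (tendsto_gauss_atBot hβ).const_mul
          (Kc t₀ * Real.exp (-((1 - t₀) / 4) * y ^ 2))
        simpa using this
      apply squeeze_zero_norm _ hg
      intro u
      rw [Real.norm_eq_abs, abs_of_nonneg (bvnPDF_nonneg ρ u y)]
      calc bvnPDF ρ u y ≤ Kc t₀ * Real.exp (-((1 - t₀) / 4) * (u ^ 2 + y ^ 2)) :=
            bvn_le ht₀1 hρt₀ u y
        _ = (Kc t₀ * Real.exp (-((1 - t₀) / 4) * y ^ 2)) *
            Real.exp (-((1 - t₀) / 4) * u ^ 2) := by rw [exp_split]; ring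
    have hint : Integrable (fun u => phiU ρ u y) (volume.restrict (Iic x)) := by
      apply Integrable.mono'
        (((integrable_exp_neg_mul_sq hβ).const_mul
          ((1 - t₀ ^ 2)⁻¹ * Kc t₀ * Real.exp (-((1 - t₀) / 4) * y ^ 2))).restrict)
        (phiU_cont_u ρ y).aestronglyMeasurable
      filter_upwards with u
      rw [Real.norm_eq_abs]
      calc |phiU ρ u y| ≤ (1 - t₀ ^ 2)⁻¹ * Kc t₀ *
            Real.exp (-((1 - t₀) / 4) * (u ^ 2 + y ^ 2)) := phiU_abs_le ht₀1 hρt₀ u y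
        _ = (1 - t₀ ^ 2)⁻¹ * Kc t₀ * Real.exp (-((1 - t₀) / 4) * y ^ 2) *
            Real.exp (-((1 - t₀) / 4) * u ^ 2) := by rw [exp_split]; ring
    have h0 := integral_Iic_of_hasDerivAt_of_tendsto
      (f := fun u => bvnPDF ρ u y) (f' := fun u => phiU ρ u y) (a := x) (m := 0)
      (hasDerivAt_u hρ2' x y).continuousAt.continuousWithinAt
      (fun u _ => hasDerivAt_u hρ2' u y)
      hint htend
    rw [h0, sub_zero]
  -- I1 : derivative of the inner integral
  have I1 : ∀ t ∈ ball ρ δ, ∀ u : ℝ,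
      HasDerivAt (fun r => ∫ v in Iic y, bvnPDF r u v) (phiU t u y) t := by
    intro t htmem u
    have hsub : ∀ s ∈ ball t δ, |s| ≤ t₀ := hball t htmem
    have htabs : |t| ≤ t₀ := hsub t (mem_ball_self hδ)
    have key := hasDerivAt_integral_of_dominated_loc_of_deriv_le
      (μ := volume.restrict (Iic y)) (x₀ := t)
      (F := fun r v => bvnPDF r u v) (F' := fun r v => DD r u v)
      (bound := fun v => ((1 - t₀ ^ 2) ^ 2)⁻¹ * Kc t₀ * Real.exp (-((1 - t₀) / 4) * u ^ 2) *
        Real.exp (-((1 - t₀) / 4) * v ^ 2))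
      (ball_mem_nhds t hδ)
      (Eventually.of_forall fun r => (bvn_cont_v r u).aestronglyMeasurable)
      (hint_v htabs u)
      (DD_cont_v t u).aestronglyMeasurable
      (ae_of_all _ fun v r hr => by
        rw [Real.norm_eq_abs]
        calc |DD r u v| ≤ ((1 - t₀ ^ 2) ^ 2)⁻¹ * Kc t₀ *
              Real.exp (-((1 - t₀) / 4) * (u ^ 2 + v ^ 2)) := DD_abs_le ht₀1 (hsub r hr) u v
          _ = ((1 - t₀ ^ 2) ^ 2)⁻¹ * Kc t₀ * Real.exp (-((1 - t₀) / 4) * u ^ 2) *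
              Real.exp (-((1 - t₀) / 4) * v ^ 2) := by rw [exp_split]; ring)
      (((integrable_exp_neg_mul_sq hβ).const_mul _).restrict)
      (ae_of_all _ fun v r hr => hasDerivAt_r (hsq (hsub r hr)) u v)
    have h2 := key.2
    rw [F1 htabs u] at h2
    exact h2
  -- I2 : derivative of the outer integral
  set IG : ℝ := ∫ v : ℝ, Real.exp (-((1 - t₀) / 4) * v ^ 2) with hIGdef
  have hIG0 : 0 ≤ IG := by
    rw [hIGdef]; exact integral_nonneg fun v => (Real.exp_nonneg _)
  have hmeas : ∀ r : ℝ, AEStronglyMeasurable (fun u => ∫ v in Iic y, bvnPDF r u v)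
      (volume.restrict (Iic x)) := by
    intro r
    exact ((bvn_cont2 r).stronglyMeasurable.integral_prod_right').aestronglyMeasurable
  have hFint : Integrable (fun u => ∫ v in Iic y, bvnPDF ρ u v) (volume.restrict (Iic x)) := by
    apply Integrable.mono'
      (((integrable_exp_neg_mul_sq hβ).const_mul (Kc t₀ * IG)).restrict)
      (hmeas ρ)
    filter_upwards with u
    rw [Real.norm_eq_abs, abs_of_nonneg (integral_nonneg fun v => bvnPDF_nonneg ρ u v)]
    calc (∫ v in Iic y, bvnPDF ρ u v)
        ≤ ∫ v in Iic y, (Kc t₀ * Real.exp (-((1 - t₀) / 4) * u ^ 2)) *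
            Real.exp (-((1 - t₀) / 4) * v ^ 2) := by
          apply integral_mono (hint_v hρt₀ u)
            (((integrable_exp_neg_mul_sq hβ).const_mul _).restrict)
          intro v
          calc bvnPDF ρ u v ≤ Kc t₀ * Real.exp (-((1 - t₀) / 4) * (u ^ 2 + v ^ 2)) :=
                bvn_le ht₀1 hρt₀ u v
            _ = (Kc t₀ * Real.exp (-((1 - t₀) / 4) * u ^ 2)) *
                Real.exp (-((1 - t₀) / 4) * v ^ 2) := by rw [exp_split]; ring
      _ ≤ ∫ v : ℝ, (Kc t₀ * Real.exp (-((1 - t₀) / 4) * u ^ 2)) *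
            Real.exp (-((1 - t₀) / 4) * v ^ 2) := by
          apply setIntegral_le_integral ((integrable_exp_neg_mul_sq hβ).const_mul _)
          filter_upwards with v
          have h1 : 0 ≤ Kc t₀ := Kc_nonneg ht₀1
          have h2 := Real.exp_nonneg (-((1 - t₀) / 4) * u ^ 2)
          have h3 := Real.exp_nonneg (-((1 - t₀) / 4) * v ^ 2)
          show (0:ℝ) ≤ _
          exact mul_nonneg (mul_nonneg h1 h2) h3
      _ = Kc t₀ * IG * Real.exp (-((1 - t₀) / 4) * u ^ 2) := by
          rw [MeasureTheory.integral_const_mul, hIGdef]; ring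
  have I2 := hasDerivAt_integral_of_dominated_loc_of_deriv_le
    (μ := volume.restrict (Iic x)) (x₀ := ρ)
    (F := fun r u => ∫ v in Iic y, bvnPDF r u v) (F' := fun r u => phiU r u y)
    (bound := fun u => (1 - t₀ ^ 2)⁻¹ * Kc t₀ * Real.exp (-((1 - t₀) / 4) * y ^ 2) *
      Real.exp (-((1 - t₀) / 4) * u ^ 2))
    (ball_mem_nhds ρ hδ)
    (Eventually.of_forall fun r => hmeas r)
    hFint
    (phiU_cont_u ρ y).aestronglyMeasurable
    (ae_of_all _ fun u r hr => by
      rw [Real.norm_eq_abs]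
      calc |phiU r u y| ≤ (1 - t₀ ^ 2)⁻¹ * Kc t₀ *
            Real.exp (-((1 - t₀) / 4) * (u ^ 2 + y ^ 2)) := phiU_abs_le ht₀1 (hmem r hr) u y
        _ = (1 - t₀ ^ 2)⁻¹ * Kc t₀ * Real.exp (-((1 - t₀) / 4) * y ^ 2) *
            Real.exp (-((1 - t₀) / 4) * u ^ 2) := by rw [exp_split]; ring)
    (((integrable_exp_neg_mul_sq hβ).const_mul _).restrict)
    (ae_of_all _ fun u r hr => I1 r hr u)
  have h2 := I2.2
  rw [F2] at h2
  exact h2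

end Plackett

/-- Plackett's identity: `∂Φ(x,y;ρ)/∂ρ = φ(x,y;ρ)`. -/
theorem stmt2 (x y ρ : ℝ) (hρ : ρ ∈ Set.Ioo (-1 : ℝ) 1) :
    HasDerivAt (fun r => bvnCDF r x y) (bvnPDF ρ x y) ρ := by
  exact Plackett.main x y ρ hρ
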